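/- arXiv:2108.10406 — 5 statements merged into one kernel-verified Lean document; each statement's English description precedes it below -/
import Mathlib

section
/- If G is a 3-uniform hypergraph on n vertices in which every pair of vertices has codegree at least 3, then G contains a copy of F_5, the hypergraph with vertices {1,2,3,4,5} and edges {123, 124, 345}. Consequently, every F_5-free 3-uniform hypergraph on n ≥ 5 vertices has some pair of vertices with codegree at most 2. -/
/-!
Take any pair `a, b`. Its codegree is at least 3, so it lies in edges `abc` and `abd` with
`c ≠ d`. The pair `c, d` in turn lies in at least three edges, whose third vertices are
distinct, so one of them, `e`, avoids `{a, b}`; then `abc, abd, cde` is a copy of `F_5`.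
-/

open Finset

/-- The codegree of a pair of vertices: number of edges containing both. -/
def codeg {V : Type*} [DecidableEq V] (E : Finset (Finset V)) (x y : V) : ℕ :=
  (E.filter (fun e => x ∈ e ∧ y ∈ e)).card

/-- `G` contains a copy of `F_5` (edges 123, 124, 345): five distinct vertices
`a,b,c,d,e` with `abc`, `abd`, `cde` all edges. -/
def ContainsF5 {V : Type*} [DecidableEq V] (E : Finset (Finset V)) : Prop :=
  ∃ a b c d e : V, ({a, b, c, d, e} : Finset V).card = 5 ∧
    ({a, b, c} : Finset V) ∈ E ∧ ({a, b, d} : Finset V) ∈ E ∧ ({c, d, e} : Finset V) ∈ E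

section

variable {V : Type*} [DecidableEq V]

lemma Finset.exists_eq_triple_of_card_eq_three {e : Finset V} (he : #e = 3) {x y : V}
    (hx : x ∈ e) (hy : y ∈ e) (hxy : x ≠ y) : ∃ z, z ≠ x ∧ z ≠ y ∧ e = {x, y, z} := by
  have hy' : y ∈ e.erase x := mem_erase.2 ⟨hxy.symm, hy⟩
  obtain ⟨z, hz⟩ := card_eq_one.1 <| show #((e.erase x).erase y) = 1 by
    rw [card_erase_of_mem hy', card_erase_of_mem hx, he]
  have hzmem : z ∈ (e.erase x).erase y := hz ▸ mem_singleton_self z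
  refine ⟨z, ne_of_mem_erase (mem_of_mem_erase hzmem), ne_of_mem_erase hzmem, ?_⟩
  rw [← hz, insert_erase hy', insert_erase hx]

lemma exists_third_vertex_notMem_of_card_lt_codeg {E : Finset (Finset V)} (h3 : ∀ e ∈ E, #e = 3)
    {x y : V} (hxy : x ≠ y) {s : Finset V} (hs : #s < codeg E x y) :
    ∃ z ∉ s, z ≠ x ∧ z ≠ y ∧ ({x, y, z} : Finset V) ∈ E := by
  by_contra! h
  have hsub : E.filter (fun e => x ∈ e ∧ y ∈ e) ⊆ s.image fun z => {x, y, z} := by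
    intro e he
    obtain ⟨heE, hx, hy⟩ := mem_filter.1 he
    obtain ⟨z, hzx, hzy, rfl⟩ := exists_eq_triple_of_card_eq_three (h3 e heE) hx hy hxy
    by_cases hz : z ∈ s
    · exact mem_image_of_mem _ hz
    · exact absurd heE (h z hz hzx hzy)
  exact hs.not_ge ((card_le_card hsub).trans card_image_le)

lemma containsF5_of_forall_three_le_codeg [Nontrivial V] {E : Finset (Finset V)}
    (h3 : ∀ e ∈ E, #e = 3) (hcodeg : ∀ x y : V, x ≠ y → 3 ≤ codeg E x y) : ContainsF5 E := by
  obtain ⟨a, b, hab⟩ := exists_pair_ne V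
  have hcodeg_gt {x y : V} (hxy : x ≠ y) {s : Finset V} (hs : #s ≤ 2) : #s < codeg E x y :=
    hs.trans_lt (hcodeg x y hxy)
  obtain ⟨c, -, hca, hcb, habc⟩ :=
    exists_third_vertex_notMem_of_card_lt_codeg h3 hab (s := ∅) (hcodeg_gt hab (by simp))
  obtain ⟨d, hdc, hda, hdb, habd⟩ :=
    exists_third_vertex_notMem_of_card_lt_codeg h3 hab (s := {c}) (hcodeg_gt hab (by simp))
  have hcd : c ≠ d := Ne.symm (by simpa using hdc)
  obtain ⟨e, heab, hec, hed, hcde⟩ :=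
    exists_third_vertex_notMem_of_card_lt_codeg h3 hcd (s := {a, b}) (hcodeg_gt hcd card_le_two)
  simp only [mem_insert, mem_singleton, not_or] at heab
  refine ⟨a, b, c, d, e, ?_, habc, habd, hcde⟩
  rw [card_insert_of_notMem (by simp [*, Ne.symm hca, Ne.symm hda, Ne.symm heab.1]),
    card_insert_of_notMem (by simp [*, Ne.symm hcb, Ne.symm hdb, Ne.symm heab.2]),
    card_insert_of_notMem (by simp [*, Ne.symm hec]),
    card_insert_of_notMem (by simp [Ne.symm hed]), card_singleton]

end

/-- If every pair of vertices of a 3-uniform hypergraph on at least 5 vertices has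
codegree at least 3, then it contains a copy of `F_5`. Consequently, every
`F_5`-free 3-uniform hypergraph on `n ≥ 5` vertices has a pair of vertices of
codegree at most 2. -/
theorem F5_of_min_codegree_three {V : Type*} [Fintype V] [DecidableEq V]
    (E : Finset (Finset V)) (h3 : ∀ e ∈ E, e.card = 3) (hcard : 5 ≤ Fintype.card V) :
    ((∀ x y : V, x ≠ y → 3 ≤ codeg E x y) → ContainsF5 E) ∧
    (¬ ContainsF5 E → ∃ x y : V, x ≠ y ∧ codeg E x y ≤ 2) := by
  have : Nontrivial V := Fintype.one_lt_card_iff_nontrivial.1 (by omega)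
  refine ⟨containsF5_of_forall_three_le_codeg h3, fun hfree => ?_⟩
  by_contra! hlow
  exact hfree (containsF5_of_forall_three_le_codeg h3 hlow)
end

section
/- The 3-uniform hypergraph on n vertices whose edges are all 3-sets containing a fixed vertex v is C_3^3-free and has codegree squared sum exactly C(n-1,2)·(2n-3). -/
/-!
Every edge of the star contains `v`, whereas the three edges of a loose triangle have no vertex
in common. A pair through `v` lies in `n - 2` edges and a pair avoiding `v` in exactly one
(itself together with `v`), so `co2 = (n - 1)(n - 2)² + C(n - 1, 2)`; this equals
`C(n - 1, 2)(2n - 3)` because `(n - 1)(n - 2) = 2 C(n - 1, 2)`.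
-/

open Finset

def pairCodeg {V : Type*} [DecidableEq V] (E : Finset (Finset V)) (p : Finset V) : ℕ :=
  (E.filter (fun e => p ⊆ e)).card

def co2 {V : Type*} [Fintype V] [DecidableEq V] (E : Finset (Finset V)) : ℕ :=
  ∑ p ∈ (Finset.univ : Finset V).powersetCard 2, (pairCodeg E p) ^ 2

/-- `E` contains no loose triangle `C_3^3`. -/
def C33Free {V : Type*} [DecidableEq V] (E : Finset (Finset V)) : Prop :=
  ¬ ∃ a b c x y z : V, ({a, b, c, x, y, z} : Finset V).card = 6 ∧
    ({x, a, y} : Finset V) ∈ E ∧ ({y, c, z} : Finset V) ∈ E ∧ ({z, b, x} : Finset V) ∈ E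

section StarHypergraph

variable {V : Type*} [DecidableEq V]

theorem C33Free_of_forall_mem {E : Finset (Finset V)} (v : V) (hE : ∀ e ∈ E, v ∈ e) :
    C33Free E := by
  rintro ⟨a, b, c, x, y, z, hcard, hxay, hycz, hzbx⟩
  have hnodup : [a, b, c, x, y, z].Nodup := by
    rw [← Multiset.coe_nodup, ← Multiset.toFinset_card_eq_card_iff_nodup]
    simpa using hcard
  have hv₁ := hE _ hxay
  have hv₂ := hE _ hycz
  have hv₃ := hE _ hzbx
  simp only [mem_insert, mem_singleton] at hv₁ hv₂ hv₃
  grind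

variable [Fintype V]

def starHypergraph (v : V) : Finset (Finset V) :=
  {e ∈ univ.powersetCard 3 | v ∈ e}

theorem pairCodeg_starHypergraph (v : V) {p : Finset V} (hp : #p = 2) :
    pairCodeg (starHypergraph v) p = if v ∈ p then Fintype.card V - 2 else 1 := by
  have hcodeg :
      pairCodeg (starHypergraph v) p = #{e ∈ univ.powersetCard 3 | insert v p ⊆ e} := by
    simp only [pairCodeg, starHypergraph, filter_filter, insert_subset_iff]
  have hcard : #(insert v p) ≤ 3 := (card_insert_le v p).trans_eq (by rw [hp])
  rw [hcodeg, card_filter_powersetCard_subset _ _ _ (subset_univ _) hcard, card_univ]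
  split_ifs with hv
  · simp [insert_eq_of_mem hv, hp]
  · simp [card_insert_of_notMem hv, hp]

theorem card_powersetCard_filter_mem (v : V) {k : ℕ} (hk : 1 ≤ k) :
    #{s ∈ univ.powersetCard k | v ∈ s} = (Fintype.card V - 1).choose (k - 1) := by
  simpa [singleton_subset_iff] using
    card_filter_powersetCard_subset {v} (univ : Finset V) k (subset_univ _) (by simpa)

theorem card_powersetCard_filter_notMem (v : V) (k : ℕ) :
    #{s ∈ univ.powersetCard k | v ∉ s} = (Fintype.card V - 1).choose k := by
  have : {s ∈ (univ : Finset V).powersetCard k | v ∉ s} = (univ.erase v).powersetCard k := by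
    ext s
    simp [subset_erase, and_comm]
  rw [this, card_powersetCard, card_erase_of_mem (mem_univ v), card_univ]

theorem co2_starHypergraph (v : V) :
    co2 (starHypergraph v) =
      (Fintype.card V - 1) * (Fintype.card V - 2) ^ 2 + (Fintype.card V - 1).choose 2 := by
  rw [co2, sum_congr rfl fun p hp =>
    by rw [pairCodeg_starHypergraph v (mem_powersetCard.1 hp).2, ite_pow, one_pow],
    sum_ite, sum_const, sum_const, card_powersetCard_filter_mem v one_le_two,
    card_powersetCard_filter_notMem]
  simp

end StarHypergraph

theorem choose_two_mul_two_mul_sub_three (n : ℕ) :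
    (n - 1).choose 2 * (2 * n - 3) = (n - 1) * (n - 2) ^ 2 + (n - 1).choose 2 := by
  obtain _ | _ | k := n
  · simp
  · simp
  have htwice : (k + 1) * k = (k + 1).choose 2 * 2 := by
    simpa using Nat.add_one_mul_choose_eq k 1
  rw [show 2 * (k + 2) - 3 = 2 * k + 1 by omega, show k + 2 - 1 = k + 1 by omega,
    show k + 2 - 2 = k by omega]
  nlinarith [htwice]

/-- The star: the 3-uniform hypergraph whose edges are all 3-sets containing the
fixed vertex `v` is `C_3^3`-free and has codegree squared sum `C(n-1,2)·(2n-3)`. -/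
theorem star_C33Free_co2 {V : Type*} [Fintype V] [DecidableEq V] (v : V) :
    C33Free ((Finset.univ.powersetCard 3).filter (fun e : Finset V => v ∈ e)) ∧
    co2 ((Finset.univ.powersetCard 3).filter (fun e : Finset V => v ∈ e)) =
      (Fintype.card V - 1).choose 2 * (2 * Fintype.card V - 3) := by
  refine ⟨C33Free_of_forall_mem v fun e he => (mem_filter.1 he).2, ?_⟩
  rw [← starHypergraph, co2_starHypergraph, choose_two_mul_two_mul_sub_three]
end

section
/- For every integer s ≥ 2, the maximum codegree squared sum of an n-vertex 3-uniform hypergraph containing no matching of size s is (s-1)·n^3·(1+o(1)) as n → ∞. -/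
open Finset Filter Topology

/-- `E` contains no matching of size `s` (no `s` pairwise disjoint edges). -/
def MatchFree {V : Type*} [DecidableEq V] (s : ℕ) (E : Finset (Finset V)) : Prop :=
  ¬ ∃ M : Finset (Finset V), M ⊆ E ∧ M.card = s ∧
      (M : Set (Finset V)).Pairwise (fun e f => Disjoint e f)

set_option linter.unusedSectionVars false
set_option maxHeartbeats 1000000

variable {V : Type*} [Fintype V] [DecidableEq V]

lemma card_le_of_link (G : Finset (Finset V)) (p : Finset V)
    (h : ∀ e ∈ G, p ⊆ e ∧ e.card = p.card + 1) : G.card ≤ Fintype.card V := by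
  have : G.card ≤ ((univ : Finset V).powersetCard 1).card := by
    apply Finset.card_le_card_of_injOn (fun e => e \ p)
    · intro e he
      simp only [Finset.mem_coe]
      rw [Finset.mem_powersetCard_univ, card_sdiff_of_subset (h e he).1, (h e he).2]
      simp
    · intro e he f hf hef
      have := Finset.union_sdiff_of_subset (h e (by simpa using he)).1
      have h2 := Finset.union_sdiff_of_subset (h f (by simpa using hf)).1
      simp only at hef
      rw [← this, ← h2, hef]
  simpa [Finset.card_powersetCard] using this

lemma pairCodeg_le (E : Finset (Finset V)) (hE3 : ∀ e ∈ E, e.card = 3)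
    (p : Finset V) (hp : p.card = 2) : pairCodeg E p ≤ Fintype.card V := by
  apply card_le_of_link _ p
  intro e he
  simp only [pairCodeg, Finset.mem_filter] at he
  exact ⟨he.2, by rw [hE3 e he.1, hp]⟩

lemma exists_edge_avoiding (E : Finset (Finset V)) (hE3 : ∀ e ∈ E, e.card = 3)
    (p : Finset V) (hp : p.card = 2) (F : Finset V) (hF : F.card < pairCodeg E p) :
    ∃ e ∈ E, p ⊆ e ∧ ∃ z, z ∈ e ∧ z ∉ p ∧ z ∉ F := by
  by_contra hcon
  push_neg at hcon
  have : pairCodeg E p ≤ (F.powersetCard 1).card := by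
    apply Finset.card_le_card_of_injOn (fun e => e \ p)
    · intro e he
      simp only [pairCodeg, Finset.mem_coe, Finset.mem_filter] at he
      simp only [Finset.mem_coe]
      rw [Finset.mem_powersetCard]
      constructor
      · intro z hz
        rw [Finset.mem_sdiff] at hz
        exact hcon e he.1 he.2 z hz.1 hz.2
      · rw [card_sdiff_of_subset he.2, hE3 e he.1, hp]
    · intro e he f hf hef
      simp only [pairCodeg, Finset.coe_filter, Set.mem_setOf_eq] at he hf
      simp only at hef
      rw [← Finset.union_sdiff_of_subset he.2, ← Finset.union_sdiff_of_subset hf.2, hef]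
  rw [Finset.card_powersetCard, Nat.choose_one_right] at this
  omega

set_option linter.unusedSectionVars false

lemma greedy_aux (s : ℕ) (E : Finset (Finset V)) (hE3 : ∀ e ∈ E, e.card = 3)
    (M : Finset (Finset V)) (hM2 : ∀ p ∈ M, p.card = 2)
    (hMd : ∀ p ∈ M, ∀ q ∈ M, p ≠ q → Disjoint p q)
    (hcod : ∀ p ∈ M, 3 * s ≤ pairCodeg E p) (hMs : M.card ≤ s) :
    ∀ T : Finset (Finset V), T ⊆ M →
      ∃ N : Finset (Finset V), N ⊆ E ∧ N.card = T.card ∧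
        (∀ e ∈ N, ∃ p ∈ T, p ⊆ e ∧ e ∩ (M.sup id) = p) ∧
        (∀ e ∈ N, ∀ f ∈ N, e ≠ f → Disjoint e f) := by
  set P := M.sup id with hP
  have hPcard : P.card ≤ 2 * s := by
    calc P.card = (M.biUnion id).card := by rw [hP, Finset.sup_eq_biUnion]
    _ ≤ ∑ p ∈ M, p.card := by
        apply le_trans (Finset.card_biUnion_le) (le_of_eq rfl)
    _ ≤ ∑ _p ∈ M, 2 := Finset.sum_le_sum (fun p hp => le_of_eq (hM2 p hp))
    _ = 2 * M.card := by rw [Finset.sum_const, smul_eq_mul, mul_comm]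
    _ ≤ 2 * s := by omega
  intro T
  induction T using Finset.induction_on with
  | empty => exact fun _ => ⟨∅, by simp⟩
  | @insert p T hpT ih =>
    intro hsub
    have hpM : p ∈ M := hsub (Finset.mem_insert_self p T)
    have hTM : T ⊆ M := fun x hx => hsub (Finset.mem_insert_of_mem hx)
    obtain ⟨N', hN'E, hN'card, hN'inv, hN'disj⟩ := ih hTM
    have hTcard : T.card + 1 ≤ s := by
      have : (insert p T).card ≤ M.card := Finset.card_le_card hsub
      rw [Finset.card_insert_of_notMem hpT] at this
      omega
    -- the forbidden set
    set F := P ∪ N'.sup id with hF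
    have hextra : ∀ e ∈ N', (e \ P).card ≤ 1 := by
      intro e he
      obtain ⟨q, hqT, hqe, hqP⟩ := hN'inv e he
      have h1 : (e \ P).card + (e ∩ P).card = e.card := Finset.card_sdiff_add_card_inter e P
      rw [hqP, hM2 q (hTM hqT), hE3 e (hN'E he)] at h1
      omega
    have hFcard : F.card < 3 * s := by
      have hsubF : F ⊆ P ∪ N'.biUnion (fun e => e \ P) := by
        intro x hx
        rw [hF, Finset.mem_union] at hx
        rcases hx with hx | hx
        · exact Finset.mem_union_left _ hx
        · rw [Finset.mem_sup] at hx
          obtain ⟨e, heN, hxe⟩ := hx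
          by_cases hxP : x ∈ P
          · exact Finset.mem_union_left _ hxP
          · exact Finset.mem_union_right _ (Finset.mem_biUnion.2 ⟨e, heN, Finset.mem_sdiff.2 ⟨hxe, hxP⟩⟩)
      calc F.card ≤ P.card + (N'.biUnion (fun e => e \ P)).card := by
            exact le_trans (Finset.card_le_card hsubF) (Finset.card_union_le _ _)
      _ ≤ P.card + ∑ e ∈ N', (e \ P).card := by
            exact Nat.add_le_add_left Finset.card_biUnion_le _
      _ ≤ 2 * s + ∑ _e ∈ N', 1 := by
            exact Nat.add_le_add hPcard (Finset.sum_le_sum hextra)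
      _ = 2 * s + N'.card := by rw [Finset.sum_const, smul_eq_mul, mul_one]
      _ < 3 * s := by rw [hN'card]; omega
    obtain ⟨e, heE, hpe, z, hze, hzp, hzF⟩ :=
      exists_edge_avoiding E hE3 p (hM2 p hpM) F (lt_of_lt_of_le hFcard (hcod p hpM))
    have hzP : z ∉ P := fun h => hzF (Finset.mem_union_left _ h)
    have hzN' : z ∉ N'.sup id := fun h => hzF (Finset.mem_union_right _ h)
    have hpP : p ⊆ P := Finset.le_sup (f := id) hpM
    have hediff : e \ p = {z} := by
      have h1 : (e \ p).card = 1 := by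
        rw [Finset.card_sdiff_of_subset hpe, hE3 e heE, hM2 p hpM]
      obtain ⟨w, hw⟩ := Finset.card_eq_one.1 h1
      have : z = w := by
        have := Finset.mem_sdiff.2 ⟨hze, hzp⟩
        rw [hw, Finset.mem_singleton] at this
        exact this
      rw [hw, this]
    have heq : p ∪ {z} = e := by rw [← hediff]; exact Finset.union_sdiff_of_subset hpe
    have einterP : e ∩ P = p := by
      apply Finset.Subset.antisymm
      · intro x hx
        rw [Finset.mem_inter] at hx
        have hxe := hx.1
        rw [← heq, Finset.mem_union, Finset.mem_singleton] at hxe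
        rcases hxe with h | h
        · exact h
        · exact absurd (h ▸ hx.2) hzP
      · exact Finset.subset_inter hpe hpP
    have heN' : e ∉ N' := by
      intro h
      exact hzN' (Finset.mem_sup.2 ⟨e, h, hze⟩)
    have hkey : ∀ f ∈ N', Disjoint e f := by
      intro f hf
      rw [Finset.disjoint_left]
      intro x hxe hxf
      rw [← heq, Finset.mem_union, Finset.mem_singleton] at hxe
      rcases hxe with h | h
      · obtain ⟨q, hqT, hqf, hqP⟩ := hN'inv f hf
        have hpq : p ≠ q := fun hh => hpT (hh ▸ hqT)
        have hxq : x ∈ q := by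
          rw [← hqP, Finset.mem_inter]
          exact ⟨hxf, hpP h⟩
        exact Finset.disjoint_left.1 (hMd p hpM q (hTM hqT) hpq) h hxq
      · exact hzN' (Finset.mem_sup.2 ⟨f, hf, h ▸ hxf⟩)
    refine ⟨insert e N', Finset.insert_subset heE hN'E, ?_, ?_, ?_⟩
    · rw [Finset.card_insert_of_notMem heN', Finset.card_insert_of_notMem hpT, hN'card]
    · intro f hf
      rcases Finset.mem_insert.1 hf with h | h
      · exact ⟨p, Finset.mem_insert_self _ _, h ▸ hpe, h ▸ einterP⟩
      · obtain ⟨q, hqT, hq1, hq2⟩ := hN'inv f h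
        exact ⟨q, Finset.mem_insert_of_mem hqT, hq1, hq2⟩
    · intro a ha b hb hab
      rcases Finset.mem_insert.1 ha with h1 | h1 <;> rcases Finset.mem_insert.1 hb with h2 | h2
      · exact absurd (h1.trans h2.symm) hab
      · exact h1 ▸ hkey b h2
      · exact (h2 ▸ hkey a h1).symm
      · exact hN'disj a h1 b h2 hab

lemma pair_other {e : Finset V} (h2 : e.card = 2) {a : V} (ha : a ∈ e) :
    ∃ x, x ≠ a ∧ e = {a, x} := by
  obtain ⟨c, d, hcd, rfl⟩ := Finset.card_eq_two.1 h2
  rcases Finset.mem_insert.1 ha with rfl | h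
  · exact ⟨d, fun h => hcd h.symm, rfl⟩
  · rw [Finset.mem_singleton] at h
    subst h
    exact ⟨c, fun h => hcd h, Finset.pair_comm c a⟩

lemma erdos_gallai_weak (k : ℕ) (G : Finset (Finset V)) (h2 : ∀ e ∈ G, e.card = 2)
    (hm : ∀ M ⊆ G, (∀ e ∈ M, ∀ f ∈ M, e ≠ f → Disjoint e f) → M.card ≤ k) :
    G.card ≤ k * (Fintype.card V + 1) + (2 * k) ^ 2 := by
  classical
  set n := Fintype.card V with hn
  set S := G.powerset.filter (fun M => ∀ e ∈ M, ∀ f ∈ M, e ≠ f → Disjoint e f) with hS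
  have hSne : S.Nonempty := ⟨∅, by simp [hS]⟩
  obtain ⟨M, hMS, hmax⟩ := Finset.exists_max_image S Finset.card hSne
  rw [hS, Finset.mem_filter, Finset.mem_powerset] at hMS
  obtain ⟨hMG, hMd⟩ := hMS
  have hMk : M.card ≤ k := hm M hMG hMd
  set U := M.sup id with hU
  have hUsub : ∀ g ∈ M, g ⊆ U := fun g hg => Finset.le_sup (f := id) hg
  have hUcard : U.card ≤ 2 * k := by
    calc U.card = (M.biUnion id).card := by rw [hU, Finset.sup_eq_biUnion]
    _ ≤ ∑ p ∈ M, p.card := Finset.card_biUnion_le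
    _ ≤ ∑ _p ∈ M, 2 := Finset.sum_le_sum (fun p hp => le_of_eq (h2 p (hMG hp)))
    _ = 2 * M.card := by rw [Finset.sum_const, smul_eq_mul, mul_comm]
    _ ≤ 2 * k := by omega
  have hmaxS : ∀ M' ⊆ G, (∀ e ∈ M', ∀ f ∈ M', e ≠ f → Disjoint e f) → M'.card ≤ M.card := by
    intro M' h1 h1d
    exact hmax M' (by rw [hS, Finset.mem_filter, Finset.mem_powerset]; exact ⟨h1, h1d⟩)
  have hmeet : ∀ e ∈ G, ∃ m ∈ M, ¬ Disjoint e m := by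
    intro e heG
    by_contra hcon
    push_neg at hcon
    have heM : e ∉ M := by
      intro h
      have h0 := hcon e h
      rw [disjoint_self] at h0
      have h1 := h2 e heG
      rw [h0] at h1
      simp at h1
    have : (insert e M).card ≤ M.card := by
      apply hmaxS _ (Finset.insert_subset heG hMG)
      intro c hc d hd hcd
      rcases Finset.mem_insert.1 hc with rfl | hc' <;> rcases Finset.mem_insert.1 hd with rfl | hd'
      · exact absurd rfl hcd
      · exact hcon d hd'
      · exact (hcon c hc').symm
      · exact hMd c hc' d hd' hcd
    rw [Finset.card_insert_of_notMem heM] at this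
    omega
  -- split into edges inside U and edges leaving U
  have hsplit : G.card = (G.filter (fun e => e ⊆ U)).card + (G.filter (fun e => ¬ e ⊆ U)).card :=
    (Finset.card_filter_add_card_filter_not _).symm
  have hin : (G.filter (fun e => e ⊆ U)).card ≤ (2 * k) ^ 2 := by
    have hsub : G.filter (fun e => e ⊆ U) ⊆ U.powersetCard 2 := by
      intro e he
      rw [Finset.mem_filter] at he
      rw [Finset.mem_powersetCard]
      exact ⟨he.2, h2 e he.1⟩
    calc (G.filter (fun e => e ⊆ U)).card ≤ (U.powersetCard 2).card := Finset.card_le_card hsub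
    _ = U.card.choose 2 := Finset.card_powersetCard 2 U
    _ = U.card * (U.card - 1) / 2 := Nat.choose_two_right U.card
    _ ≤ U.card * U.card := le_trans (Nat.div_le_self _ 2) (Nat.mul_le_mul_left _ (by omega))
    _ ≤ (2 * k) ^ 2 := by rw [pow_two]; exact Nat.mul_le_mul hUcard hUcard
  -- edges leaving U
  have hout : (G.filter (fun e => ¬ e ⊆ U)).card ≤ k * (n + 1) := by
    have hsub : G.filter (fun e => ¬ e ⊆ U) ⊆
        M.biUnion (fun m => G.filter (fun e => ¬ Disjoint e m ∧ ¬ e ⊆ U)) := by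
      intro e he
      rw [Finset.mem_filter] at he
      obtain ⟨m, hmM, hd⟩ := hmeet e he.1
      exact Finset.mem_biUnion.2 ⟨m, hmM, Finset.mem_filter.2 ⟨he.1, hd, he.2⟩⟩
    have hper : ∀ m ∈ M, (G.filter (fun e => ¬ Disjoint e m ∧ ¬ e ⊆ U)).card ≤ n + 1 := by
      intro m hmM
      obtain ⟨a, b, hab, hmab⟩ := Finset.card_eq_two.1 (h2 m (hMG hmM))
      have haU : a ∈ U := hUsub m hmM (by rw [hmab]; simp)
      have hbU : b ∈ U := hUsub m hmM (by rw [hmab]; simp)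
      set A := G.filter (fun e => ¬ Disjoint e m ∧ ¬ e ⊆ U) with hA
      set Aa := G.filter (fun e => a ∈ e ∧ ¬ e ⊆ U) with hAa
      set Ab := G.filter (fun e => b ∈ e ∧ ¬ e ⊆ U) with hAb
      have hAsub : A ⊆ Aa ∪ Ab := by
        intro e he
        rw [hA, Finset.mem_filter] at he
        obtain ⟨heG, hd, hnU⟩ := he
        rw [Finset.not_disjoint_iff] at hd
        obtain ⟨x, hxe, hxm⟩ := hd
        rw [hmab, Finset.mem_insert, Finset.mem_singleton] at hxm
        rcases hxm with rfl | rfl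
        · exact Finset.mem_union_left _ (Finset.mem_filter.2 ⟨heG, hxe, hnU⟩)
        · exact Finset.mem_union_right _ (Finset.mem_filter.2 ⟨heG, hxe, hnU⟩)
      have hAacard : Aa.card ≤ n := by
        apply card_le_of_link
        intro e he
        rw [hAa, Finset.mem_filter] at he
        refine ⟨Finset.singleton_subset_iff.2 he.2.1, ?_⟩
        rw [h2 e he.1, Finset.card_singleton]
      have hAbcard : Ab.card ≤ n := by
        apply card_le_of_link
        intro e he
        rw [hAb, Finset.mem_filter] at he
        refine ⟨Finset.singleton_subset_iff.2 he.2.1, ?_⟩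
        rw [h2 e he.1, Finset.card_singleton]
      -- key claim
      have hkey : ∀ e ∈ Aa, ∀ f ∈ Ab, ∀ x, x ≠ a → e = {a, x} → ∀ y, y ≠ b → f = {b, y} → x = y := by
        intro e heA f hfA x hxa hex y hyb hfy
        by_contra hxy
        rw [hAa, Finset.mem_filter] at heA
        rw [hAb, Finset.mem_filter] at hfA
        have hxU : x ∉ U := by
          intro h
          apply heA.2.2
          rw [hex]
          intro v hv
          rcases Finset.mem_insert.1 hv with rfl | hv'
          · exact haU
          · rw [Finset.mem_singleton] at hv'
            exact hv' ▸ h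
        have hyU : y ∉ U := by
          intro h
          apply hfA.2.2
          rw [hfy]
          intro v hv
          rcases Finset.mem_insert.1 hv with rfl | hv'
          · exact hbU
          · rw [Finset.mem_singleton] at hv'
            exact hv' ▸ h
        have hmemU : ∀ v, v ∈ U → v ∈ e → v = a := by
          intro v hvU hve
          rw [hex, Finset.mem_insert, Finset.mem_singleton] at hve
          rcases hve with rfl | rfl
          · rfl
          · exact absurd hvU hxU
        have hmemUf : ∀ v, v ∈ U → v ∈ f → v = b := by
          intro v hvU hvf
          rw [hfy, Finset.mem_insert, Finset.mem_singleton] at hvf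
          rcases hvf with rfl | rfl
          · rfl
          · exact absurd hvU hyU
        have heM : e ∉ M := fun h => heA.2.2 (hUsub e h)
        have hfM : f ∉ M := fun h => hfA.2.2 (hUsub f h)
        have hef : e ≠ f := by
          intro h
          have : a ∈ f := h ▸ heA.2.1
          have := hmemUf a haU this
          exact hab this
        have hdisj_ef : Disjoint e f := by
          rw [Finset.disjoint_left]
          intro v hve hvf
          rw [hex, Finset.mem_insert, Finset.mem_singleton] at hve
          rcases hve with rfl | rfl
          · exact hab (hmemUf v haU hvf)
          · rw [hfy, Finset.mem_insert, Finset.mem_singleton] at hvf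
            rcases hvf with rfl | rfl
            · exact hxU hbU
            · exact hxy rfl
        have hdisj_e : ∀ g, g ∈ M.erase m → Disjoint e g := by
          intro g hg
          obtain ⟨hgm, hgM⟩ := Finset.mem_erase.1 hg
          rw [Finset.disjoint_left]
          intro v hve hvg
          have hvU : v ∈ U := hUsub g hgM hvg
          have := hmemU v hvU hve
          subst this
          have ham : v ∈ m := by rw [hmab]; simp
          exact Finset.disjoint_left.1 (hMd g hgM m hmM hgm) hvg ham
        have hdisj_f : ∀ g, g ∈ M.erase m → Disjoint f g := by
          intro g hg
          obtain ⟨hgm, hgM⟩ := Finset.mem_erase.1 hg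
          rw [Finset.disjoint_left]
          intro v hvf hvg
          have hvU : v ∈ U := hUsub g hgM hvg
          have := hmemUf v hvU hvf
          subst this
          have hbm : v ∈ m := by rw [hmab]; simp
          exact Finset.disjoint_left.1 (hMd g hgM m hmM hgm) hvg hbm
        have hfnot : f ∉ M.erase m := fun h => hfM (Finset.mem_erase.1 h).2
        have henot : e ∉ insert f (M.erase m) := by
          intro h
          rcases Finset.mem_insert.1 h with h' | h'
          · exact hef h'
          · exact heM (Finset.mem_erase.1 h').2
        have hcard' : (insert e (insert f (M.erase m))).card ≤ M.card := by
          apply hmaxS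
          · intro c hc
            rcases Finset.mem_insert.1 hc with rfl | hc'
            · exact heA.1
            rcases Finset.mem_insert.1 hc' with rfl | hc''
            · exact hfA.1
            · exact hMG (Finset.mem_erase.1 hc'').2
          · intro c hc d hd hcd
            rcases Finset.mem_insert.1 hc with rfl | hc' <;>
              rcases Finset.mem_insert.1 hd with rfl | hd'
            · exact absurd rfl hcd
            · rcases Finset.mem_insert.1 hd' with rfl | hd''
              · exact hdisj_ef
              · exact hdisj_e d hd''
            · rcases Finset.mem_insert.1 hc' with rfl | hc''
              · exact hdisj_ef.symm
              · exact (hdisj_e c hc'').symm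
            · rcases Finset.mem_insert.1 hc' with rfl | hc'' <;>
                rcases Finset.mem_insert.1 hd' with rfl | hd''
              · exact absurd rfl hcd
              · exact hdisj_f d hd''
              · exact (hdisj_f c hc'').symm
              · exact hMd c (Finset.mem_erase.1 hc'').2 d (Finset.mem_erase.1 hd'').2 hcd
        rw [Finset.card_insert_of_notMem henot, Finset.card_insert_of_notMem hfnot,
          Finset.card_erase_of_mem hmM] at hcard'
        have hM1 : 1 ≤ M.card := Finset.card_pos.2 ⟨m, hmM⟩
        omega
      -- now bound A
      by_cases hAane : Aa.Nonempty
      · by_cases hAbne : Ab.Nonempty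
        · -- both nonempty: A is contained in pairs from {a, b, x₀}
          obtain ⟨e₀, he₀⟩ := hAane
          obtain ⟨f₀, hf₀⟩ := hAbne
          have he₀' := Finset.mem_filter.1 he₀
          have hf₀' := Finset.mem_filter.1 hf₀
          obtain ⟨x₀, hx₀a, hex₀⟩ := pair_other (h2 e₀ he₀'.1) he₀'.2.1
          obtain ⟨y₀, hy₀b, hfy₀⟩ := pair_other (h2 f₀ hf₀'.1) hf₀'.2.1
          have hx₀y₀ : x₀ = y₀ := hkey e₀ he₀ f₀ hf₀ x₀ hx₀a hex₀ y₀ hy₀b hfy₀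
          have hAsub3 : A ⊆ ({a, b, x₀} : Finset V).powersetCard 2 := by
            intro e heA2
            have heA3 := hAsub heA2
            rw [Finset.mem_powersetCard]
            have heG : e ∈ G := (Finset.mem_filter.1 (by rw [hA] at heA2; exact heA2)).1
            refine ⟨?_, h2 e heG⟩
            rcases Finset.mem_union.1 heA3 with he' | he'
            · have he'' := Finset.mem_filter.1 he'
              obtain ⟨x, hxa, hex⟩ := pair_other (h2 e he''.1) he''.2.1
              have : x = y₀ := hkey e he' f₀ hf₀ x hxa hex y₀ hy₀b hfy₀
              rw [hex, this, ← hx₀y₀]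
              intro v hv
              rcases Finset.mem_insert.1 hv with rfl | hv'
              · simp
              · rw [Finset.mem_singleton] at hv'; subst hv'; simp
            · have he'' := Finset.mem_filter.1 he'
              obtain ⟨y, hyb, hey⟩ := pair_other (h2 e he''.1) he''.2.1
              have : x₀ = y := hkey e₀ he₀ e he' x₀ hx₀a hex₀ y hyb hey
              rw [hey, ← this]
              intro v hv
              rcases Finset.mem_insert.1 hv with rfl | hv'
              · simp
              · rw [Finset.mem_singleton] at hv'; subst hv'; simp
          have hn2 : 2 ≤ n := by
            have : ({a, b} : Finset V).card = 2 := Finset.card_pair hab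
            calc 2 = ({a, b} : Finset V).card := this.symm
            _ ≤ (univ : Finset V).card := Finset.card_le_card (Finset.subset_univ _)
            _ = n := Finset.card_univ
          calc A.card ≤ (({a, b, x₀} : Finset V).powersetCard 2).card :=
                Finset.card_le_card hAsub3
          _ = ({a, b, x₀} : Finset V).card.choose 2 := Finset.card_powersetCard 2 _
          _ ≤ Nat.choose 3 2 := by
              apply Nat.choose_le_choose
              calc ({a, b, x₀} : Finset V).card ≤ ({b, x₀} : Finset V).card + 1 :=
                    Finset.card_insert_le _ _
              _ ≤ (({x₀} : Finset V).card + 1) + 1 :=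
                    Nat.add_le_add_right (Finset.card_insert_le _ _) 1
              _ = 3 := by rw [Finset.card_singleton]
          _ ≤ n + 1 := by
              have h3 : Nat.choose 3 2 = 3 := by decide
              rw [h3]; omega
        · rw [Finset.not_nonempty_iff_eq_empty] at hAbne
          calc A.card ≤ (Aa ∪ Ab).card := Finset.card_le_card hAsub
          _ = Aa.card := by rw [hAbne, Finset.union_empty]
          _ ≤ n + 1 := by omega
      · rw [Finset.not_nonempty_iff_eq_empty] at hAane
        calc A.card ≤ (Aa ∪ Ab).card := Finset.card_le_card hAsub
        _ = Ab.card := by rw [hAane, Finset.empty_union]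
        _ ≤ n + 1 := by omega
    calc (G.filter (fun e => ¬ e ⊆ U)).card
        ≤ (M.biUnion (fun m => G.filter (fun e => ¬ Disjoint e m ∧ ¬ e ⊆ U))).card :=
          Finset.card_le_card hsub
    _ ≤ ∑ m ∈ M, (G.filter (fun e => ¬ Disjoint e m ∧ ¬ e ⊆ U)).card := Finset.card_biUnion_le
    _ ≤ ∑ _m ∈ M, (n + 1) := Finset.sum_le_sum hper
    _ = M.card * (n + 1) := by rw [Finset.sum_const, smul_eq_mul]
    _ ≤ k * (n + 1) := Nat.mul_le_mul_right _ hMk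
  omega

lemma co2_upper (s : ℕ) (hs : 2 ≤ s) (E : Finset (Finset V)) (hE3 : ∀ e ∈ E, e.card = 3)
    (hMF : MatchFree s E) :
    co2 E ≤ (s - 1) * Fintype.card V ^ 3 + 14 * s ^ 2 * Fintype.card V ^ 2 := by
  classical
  set n := Fintype.card V with hn
  set P2 := (Finset.univ : Finset V).powersetCard 2 with hP2
  have hP2card : P2.card ≤ n ^ 2 := by
    rw [hP2, Finset.card_powersetCard, Finset.card_univ, ← hn]
    calc n.choose 2 = n * (n - 1) / 2 := Nat.choose_two_right n
    _ ≤ n * n := le_trans (Nat.div_le_self _ 2) (Nat.mul_le_mul_left _ (by omega))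
    _ = n ^ 2 := (pow_two n).symm
  set D := P2.filter (fun p => 3 * s ≤ pairCodeg E p) with hD
  have hDcard : D.card ≤ (s - 1) * (n + 1) + (2 * (s - 1)) ^ 2 := by
    apply erdos_gallai_weak
    · intro p hp
      exact Finset.mem_powersetCard_univ.1 (Finset.mem_filter.1 hp).1
    · intro M hMD hMdisj
      by_contra hc
      push_neg at hc
      have hsM : s ≤ M.card := by omega
      obtain ⟨M', hM'M, hM'card⟩ := Finset.exists_subset_card_eq hsM
      have hM'D : M' ⊆ D := hM'M.trans hMD
      obtain ⟨N, hNE, hNcard, _, hNdisj⟩ := greedy_aux s E hE3 M'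
        (fun p hp => Finset.mem_powersetCard_univ.1 (Finset.mem_filter.1 (hM'D hp)).1)
        (fun p hp q hq hpq => hMdisj p (hM'M hp) q (hM'M hq) hpq)
        (fun p hp => (Finset.mem_filter.1 (hM'D hp)).2)
        (le_of_eq hM'card) M' (Finset.Subset.refl M')
      exact hMF ⟨N, hNE, by rw [hNcard, hM'card],
        fun e he f hf hef => hNdisj e (Finset.mem_coe.1 he) f (Finset.mem_coe.1 hf) hef⟩
  have hsplit : co2 E = ∑ p ∈ D, pairCodeg E p ^ 2 +
      ∑ p ∈ P2.filter (fun p => ¬ 3 * s ≤ pairCodeg E p), pairCodeg E p ^ 2 := by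
    rw [co2, ← hP2, ← Finset.sum_filter_add_sum_filter_not P2 (fun p => 3 * s ≤ pairCodeg E p)]
  have h1 : ∑ p ∈ D, pairCodeg E p ^ 2 ≤ D.card * n ^ 2 := by
    rw [← smul_eq_mul]
    apply Finset.sum_le_card_nsmul
    intro p hp
    have hp2 : p.card = 2 := Finset.mem_powersetCard_univ.1 (Finset.mem_filter.1 hp).1
    exact Nat.pow_le_pow_left (pairCodeg_le E hE3 p hp2) 2
  have h2 : ∑ p ∈ P2.filter (fun p => ¬ 3 * s ≤ pairCodeg E p), pairCodeg E p ^ 2 ≤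
      P2.card * (3 * s) ^ 2 := by
    calc ∑ p ∈ P2.filter (fun p => ¬ 3 * s ≤ pairCodeg E p), pairCodeg E p ^ 2
        ≤ (P2.filter (fun p => ¬ 3 * s ≤ pairCodeg E p)).card * (3 * s) ^ 2 := by
          rw [← smul_eq_mul]
          apply Finset.sum_le_card_nsmul
          intro p hp
          have := (Finset.mem_filter.1 hp).2
          exact Nat.pow_le_pow_left (by omega) 2
    _ ≤ P2.card * (3 * s) ^ 2 :=
          Nat.mul_le_mul_right _ (Finset.card_le_card (Finset.filter_subset _ _))
  obtain ⟨t, rfl⟩ : ∃ t, s = t + 1 := ⟨s - 1, by omega⟩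
  have hsub : t + 1 - 1 = t := by omega
  rw [hsplit, hsub]
  rw [hsub] at hDcard
  have hDn : D.card * n ^ 2 ≤ ((t * (n + 1)) + (2 * t) ^ 2) * n ^ 2 :=
    Nat.mul_le_mul_right _ hDcard
  have h2' : ∑ p ∈ P2.filter (fun p => ¬ 3 * (t + 1) ≤ pairCodeg E p), pairCodeg E p ^ 2 ≤
      n ^ 2 * (3 * (t + 1)) ^ 2 := le_trans h2 (Nat.mul_le_mul_right _ hP2card)
  nlinarith [h1, h2', hDn, sq_nonneg n, sq_nonneg t]

lemma lower_bound (s n : ℕ) (hs : 2 ≤ s) (hn : s + 2 ≤ n) :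
    ∃ E : Finset (Finset (Fin n)), (∀ e ∈ E, e.card = 3) ∧ MatchFree s E ∧
      (s - 1) * (n - (s - 1)) * (n - 2) ^ 2 ≤ co2 E := by
  classical
  have hs1n : s - 1 < n := by omega
  set S : Finset (Fin n) := (Finset.range (s - 1)).attachFin
    (fun m hm => lt_of_lt_of_le (Finset.mem_range.1 hm) (by omega)) with hSdef
  have hScard : S.card = s - 1 := by
    rw [hSdef, Finset.card_attachFin, Finset.card_range]
  set E := ((Finset.univ : Finset (Fin n)).powersetCard 3).filter
    (fun e => ¬ Disjoint e S) with hEdef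
  have hE3 : ∀ e ∈ E, e.card = 3 := by
    intro e he
    exact Finset.mem_powersetCard_univ.1 (Finset.mem_filter.1 he).1
  have hMF : MatchFree s E := by
    rintro ⟨M, hME, hMcard, hMdisj⟩
    have hne : ∀ e ∈ M, (e ∩ S).Nonempty := by
      intro e he
      have := (Finset.mem_filter.1 (hME he)).2
      rw [Finset.not_disjoint_iff] at this
      obtain ⟨x, hx1, hx2⟩ := this
      exact ⟨x, Finset.mem_inter.2 ⟨hx1, hx2⟩⟩
    have hcardle : M.card ≤ S.card := by
      apply Finset.card_le_card_of_injOn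
        (fun e => if h : (e ∩ S).Nonempty then (e ∩ S).min' h else ⟨0, by omega⟩)
      · intro e he
        simp only [dif_pos (hne e he)]
        exact (Finset.mem_inter.1 ((e ∩ S).min'_mem (hne e he))).2
      · intro e he f hf hef
        by_contra hne'
        simp only [dif_pos (hne e (Finset.mem_coe.1 he)), dif_pos (hne f (Finset.mem_coe.1 hf))]
          at hef
        have h1 := (Finset.mem_inter.1 ((e ∩ S).min'_mem (hne e (Finset.mem_coe.1 he)))).1
        have h2 := (Finset.mem_inter.1 ((f ∩ S).min'_mem (hne f (Finset.mem_coe.1 hf)))).1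
        rw [hef] at h1
        exact Finset.disjoint_left.1 (hMdisj he hf hne') h1 h2
    rw [hMcard, hScard] at hcardle
    omega
  refine ⟨E, hE3, hMF, ?_⟩
  set Q := ((S ×ˢ ((Finset.univ : Finset (Fin n)) \ S)).image
    (fun xy => ({xy.1, xy.2} : Finset (Fin n)))) with hQdef
  have hmemQ : ∀ p ∈ Q, ∃ x y : Fin n, x ∈ S ∧ y ∉ S ∧ x ≠ y ∧ p = {x, y} := by
    intro p hp
    rw [hQdef, Finset.mem_image] at hp
    obtain ⟨⟨x, y⟩, hxy, rfl⟩ := hp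
    rw [Finset.mem_product] at hxy
    have hyS : y ∉ S := (Finset.mem_sdiff.1 hxy.2).2
    exact ⟨x, y, hxy.1, hyS, fun h => hyS (h ▸ hxy.1), rfl⟩
  have hQP2 : Q ⊆ (Finset.univ : Finset (Fin n)).powersetCard 2 := by
    intro p hp
    obtain ⟨x, y, _, _, hxy, rfl⟩ := hmemQ p hp
    rw [Finset.mem_powersetCard_univ]
    exact Finset.card_pair hxy
  have hQcard : Q.card = (s - 1) * (n - (s - 1)) := by
    rw [hQdef, Finset.card_image_of_injOn, Finset.card_product, hScard, Finset.card_sdiff_of_subset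
      (Finset.subset_univ S), Finset.card_univ, Fintype.card_fin, hScard]
    rintro ⟨x, y⟩ hxy ⟨x', y'⟩ hxy' heq
    rw [Finset.mem_coe, Finset.mem_product] at hxy hxy'
    simp only at heq
    have hyS : y ∉ S := (Finset.mem_sdiff.1 hxy.2).2
    have hy'S : y' ∉ S := (Finset.mem_sdiff.1 hxy'.2).2
    have hx'mem : x' ∈ ({x, y} : Finset (Fin n)) := by rw [heq]; simp
    have hxx' : x = x' := by
      rcases Finset.mem_insert.1 hx'mem with h | h
      · exact h.symm
      · rw [Finset.mem_singleton] at h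
        exact absurd (h ▸ hxy'.1) hyS
    subst hxx'
    have hy'mem : y' ∈ ({x, y} : Finset (Fin n)) := by rw [heq]; simp
    have hyy' : y = y' := by
      rcases Finset.mem_insert.1 hy'mem with h | h
      · exact absurd (h ▸ hxy.1) hy'S
      · exact (Finset.mem_singleton.1 h).symm
    rw [hyy']
  have hcodeg : ∀ p ∈ Q, n - 2 ≤ pairCodeg E p := by
    intro p hp
    obtain ⟨x, y, hxS, _, hxy, rfl⟩ := hmemQ p hp
    set p : Finset (Fin n) := {x, y} with hpdef
    have hpcard : p.card = 2 := Finset.card_pair hxy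
    have himg : ((Finset.univ \ p).image (fun z => insert z p)) ⊆ E.filter (fun e => p ⊆ e) := by
      intro e he
      rw [Finset.mem_image] at he
      obtain ⟨z, hz, rfl⟩ := he
      have hzp : z ∉ p := (Finset.mem_sdiff.1 hz).2
      rw [Finset.mem_filter]
      refine ⟨?_, Finset.subset_insert z p⟩
      rw [hEdef, Finset.mem_filter, Finset.mem_powersetCard_univ]
      refine ⟨by rw [Finset.card_insert_of_notMem hzp, hpcard], ?_⟩
      rw [Finset.not_disjoint_iff]
      exact ⟨x, Finset.mem_insert_of_mem (by simp [hpdef]), hxS⟩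
    have hinj : ((Finset.univ \ p).image (fun z => insert z p)).card = n - 2 := by
      rw [Finset.card_image_of_injOn, Finset.card_sdiff_of_subset (Finset.subset_univ p),
        Finset.card_univ, Fintype.card_fin, hpcard]
      intro z hz z' hz' heq
      simp only at heq
      have hzp : z ∉ p := (Finset.mem_sdiff.1 (Finset.mem_coe.1 hz)).2
      have hz'p : z' ∉ p := (Finset.mem_sdiff.1 (Finset.mem_coe.1 hz')).2
      have : z ∈ insert z' p := heq ▸ Finset.mem_insert_self z p
      rcases Finset.mem_insert.1 this with h | h
      · exact h
      · exact absurd h hzp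
    calc n - 2 = ((Finset.univ \ p).image (fun z => insert z p)).card := hinj.symm
    _ ≤ (E.filter (fun e => p ⊆ e)).card := Finset.card_le_card himg
    _ = pairCodeg E p := rfl
  calc (s - 1) * (n - (s - 1)) * (n - 2) ^ 2 = Q.card * (n - 2) ^ 2 := by rw [hQcard]
  _ = Q.card • (n - 2) ^ 2 := (smul_eq_mul ..).symm
  _ ≤ ∑ p ∈ Q, pairCodeg E p ^ 2 := by
      apply Finset.card_nsmul_le_sum
      intro p hp
      exact Nat.pow_le_pow_left (hcodeg p hp) 2
  _ ≤ ∑ p ∈ (Finset.univ : Finset (Fin n)).powersetCard 2, pairCodeg E p ^ 2 :=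
      Finset.sum_le_sum_of_subset hQP2
  _ = co2 E := rfl

/-- For `s ≥ 2`, the maximum codegree squared sum of an `n`-vertex 3-uniform
hypergraph with no matching of size `s` is `(s-1)·n^3·(1+o(1))`. -/
theorem exco2_matching (s : ℕ) (hs : 2 ≤ s) :
    Tendsto (fun n : ℕ =>
        ((sSup {m : ℕ | ∃ E : Finset (Finset (Fin n)),
            (∀ e ∈ E, e.card = 3) ∧ MatchFree s E ∧ co2 E = m} : ℕ) : ℝ) / (n : ℝ) ^ 3)
      atTop (𝓝 ((s : ℝ) - 1)) := by
  set A : ℕ → Set ℕ := fun n => {m : ℕ | ∃ E : Finset (Finset (Fin n)),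
      (∀ e ∈ E, e.card = 3) ∧ MatchFree s E ∧ co2 E = m} with hA
  set F : ℕ → ℝ := fun n => ((sSup (A n) : ℕ) : ℝ) / (n : ℝ) ^ 3 with hF
  have hAne : ∀ n, (A n).Nonempty := by
    intro n
    refine ⟨co2 (∅ : Finset (Finset (Fin n))), ⟨∅, by simp, ?_, rfl⟩⟩
    rintro ⟨M, hME, hMcard, _⟩
    have : M = ∅ := Finset.subset_empty.1 hME
    rw [this] at hMcard
    simp at hMcard
    omega
  have hAbdd : ∀ n, ∀ m ∈ A n, m ≤ (s - 1) * n ^ 3 + 14 * s ^ 2 * n ^ 2 := by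
    intro n m hm
    obtain ⟨E, hE3, hMF, hco2⟩ := hm
    have := co2_upper s hs E hE3 hMF
    rw [Fintype.card_fin] at this
    omega
  have hupper : ∀ n : ℕ, sSup (A n) ≤ (s - 1) * n ^ 3 + 14 * s ^ 2 * n ^ 2 := by
    intro n
    exact csSup_le (hAne n) (hAbdd n)
  have hlower : ∀ n : ℕ, s + 2 ≤ n → (s - 1) * (n - (s - 1)) * (n - 2) ^ 2 ≤ sSup (A n) := by
    intro n hn
    obtain ⟨E, hE3, hMF, hle⟩ := lower_bound s n hs hn
    have hmem : co2 E ∈ A n := ⟨E, hE3, hMF, rfl⟩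
    exact le_trans hle (le_csSup ⟨_, hAbdd n⟩ hmem)
  -- the two bounding sequences
  set g : ℕ → ℝ := fun n => ((s : ℝ) - 1) * (1 - ((s : ℝ) - 1) / n) * (1 - 2 / n) ^ 2 with hg
  set u : ℕ → ℝ := fun n => ((s : ℝ) - 1) + 14 * (s : ℝ) ^ 2 / n with hu
  have hgt : Tendsto g atTop (𝓝 ((s : ℝ) - 1)) := by
    have h1 : Tendsto (fun n : ℕ => 1 - ((s : ℝ) - 1) / n) atTop (𝓝 (1 - 0)) :=
      tendsto_const_nhds.sub (tendsto_const_div_atTop_nhds_zero_nat _)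
    have h2 : Tendsto (fun n : ℕ => (1 - 2 / (n : ℝ)) ^ 2) atTop (𝓝 ((1 - 0) ^ 2)) :=
      (tendsto_const_nhds.sub (tendsto_const_div_atTop_nhds_zero_nat _)).pow 2
    have := (((tendsto_const_nhds : Tendsto (fun _ : ℕ => ((s : ℝ) - 1)) atTop (𝓝 ((s : ℝ) - 1)))).mul h1).mul h2
    simp only [sub_zero, mul_one, one_pow] at this
    exact this
  have hut : Tendsto u atTop (𝓝 ((s : ℝ) - 1)) := by
    have := ((tendsto_const_nhds : Tendsto (fun _ : ℕ => ((s : ℝ) - 1)) atTop (𝓝 ((s : ℝ) - 1)))).add (tendsto_const_div_atTop_nhds_zero_nat (14 * (s : ℝ) ^ 2))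
    simp only [add_zero] at this
    exact this
  apply tendsto_of_tendsto_of_tendsto_of_le_of_le' hgt hut
  · -- g ≤ F eventually
    filter_upwards [eventually_ge_atTop (s + 2)] with n hn
    have hnn : 0 < n := by omega
    have hn0 : (0 : ℝ) < (n : ℝ) := by exact_mod_cast hnn
    have h1 : 1 ≤ s := by omega
    have h2 : s - 1 ≤ n := by omega
    have h3 : 2 ≤ n := by omega
    have hcast : (((s - 1) * (n - (s - 1)) * (n - 2) ^ 2 : ℕ) : ℝ)
        = ((s : ℝ) - 1) * ((n : ℝ) - ((s : ℝ) - 1)) * ((n : ℝ) - 2) ^ 2 := by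
      push_cast [Nat.cast_sub h1, Nat.cast_sub h2, Nat.cast_sub h3]
      ring
    have hineq : (((s - 1) * (n - (s - 1)) * (n - 2) ^ 2 : ℕ) : ℝ) ≤ ((sSup (A n) : ℕ) : ℝ) :=
      Nat.cast_le.2 (hlower n hn)
    have hne' : (n : ℝ) ≠ 0 := ne_of_gt hn0
    calc g n = (((s - 1) * (n - (s - 1)) * (n - 2) ^ 2 : ℕ) : ℝ) / (n : ℝ) ^ 3 := by
          rw [hcast]
          show ((s : ℝ) - 1) * (1 - ((s : ℝ) - 1) / (n : ℝ)) * (1 - 2 / (n : ℝ)) ^ 2 = _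
          rw [eq_div_iff (by positivity : ((n : ℝ) ^ 3) ≠ 0)]
          field_simp
    _ ≤ F n := by
          show _ ≤ ((sSup (A n) : ℕ) : ℝ) / (n : ℝ) ^ 3
          gcongr
  · -- F ≤ u eventually
    filter_upwards [eventually_ge_atTop 1] with n hn
    have hn0 : (0 : ℝ) < (n : ℝ) := by exact_mod_cast hn
    have h1 : ((sSup (A n) : ℕ) : ℝ) ≤ ((s : ℝ) - 1) * (n : ℝ) ^ 3 + 14 * (s : ℝ) ^ 2 * (n : ℝ) ^ 2 := by
      have hc : (((s - 1) * n ^ 3 + 14 * s ^ 2 * n ^ 2 : ℕ) : ℝ)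
          = ((s : ℝ) - 1) * (n : ℝ) ^ 3 + 14 * (s : ℝ) ^ 2 * (n : ℝ) ^ 2 := by
        push_cast [Nat.cast_sub (show 1 ≤ s by omega)]
        ring
      calc ((sSup (A n) : ℕ) : ℝ) ≤ (((s - 1) * n ^ 3 + 14 * s ^ 2 * n ^ 2 : ℕ) : ℝ) :=
            Nat.cast_le.2 (hupper n)
      _ = _ := hc
    have hne' : (n : ℝ) ≠ 0 := ne_of_gt hn0
    calc F n ≤ (((s : ℝ) - 1) * (n : ℝ) ^ 3 + 14 * (s : ℝ) ^ 2 * (n : ℝ) ^ 2) / (n : ℝ) ^ 3 := by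
          show ((sSup (A n) : ℕ) : ℝ) / (n : ℝ) ^ 3 ≤ _
          gcongr
    _ = u n := by
          show _ = (s : ℝ) - 1 + 14 * (s : ℝ) ^ 2 / (n : ℝ)
          field_simp
end

section
/- There is no labeling v_1 < v_2 < v_3 < v_4 < v_5 of the vertices of the tight 5-cycle C_5 (edges v1v2v3, v2v3v4, v3v4v5, v4v5v1, v5v1v2) together with a 3-coloring φ of pairs such that every edge {a,b,c} with a<b<c has φ(a,b) red, φ(a,c) blue, φ(b,c) green. That is, C_5 does not satisfy the Reiher–Rödl–Schacht zero-uniform-Turán-density condition. -/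
/-!
In an edge `a < b < c` the colour of a pair records where the third vertex lies relative to it:
below both ends (green), between them (blue) or above both (red). Hence if `{x, y, z}` and
`{w, y, z}` are edges and `x` lies below `y` and `z`, so does `w`. Let `v` be the lowest vertex
of `C_5`. The pair `v+1, v+2`, which lies in edges with `v` and with `v+3`, puts `v+3` below
`v+2`; the pair `v+3, v+4`, which lies in edges with `v` and with `v+2`, puts `v+2` below `v+3`.
-/

open Finset

/-- The edges of the tight 5-cycle `C_5` on `Fin 5`:
012, 123, 234, 340, 401. -/
def C5edges : Finset (Finset (Fin 5)) :=
  {({0, 1, 2} : Finset (Fin 5)), ({1, 2, 3} : Finset (Fin 5)), ({2, 3, 4} : Finset (Fin 5)),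
   ({3, 4, 0} : Finset (Fin 5)), ({4, 0, 1} : Finset (Fin 5))}

def IsRRSColoring {V α : Type*} [DecidableEq V] [LinearOrder α] (E : Finset (Finset V))
    (f : V → α) (φ : V → V → Fin 3) : Prop :=
  ∀ a b c : V, ({a, b, c} : Finset V) ∈ E → f a < f b → f b < f c →
    (φ a b = 0 ∧ φ a c = 1 ∧ φ b c = 2)

lemma Finset.ne_and_ne_and_ne_of_card_eq_three {V : Type*} [DecidableEq V] {x y z : V}
    (h : #{x, y, z} = 3) : x ≠ y ∧ x ≠ z ∧ y ≠ z := by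
  refine ⟨?_, ?_, ?_⟩ <;> rintro rfl <;> simp at h <;> grind [card_le_two]

namespace IsRRSColoring

variable {V α : Type*} [DecidableEq V] [LinearOrder α] {E : Finset (Finset V)} {f : V → α}
  {φ : V → V → Fin 3}

lemma lt_left_of_lt_left (h : IsRRSColoring E f φ) (hE : ∀ e ∈ E, #e = 3) (hf : f.Injective)
    {x y z w : V} (hx : ({x, y, z} : Finset V) ∈ E) (hw : ({w, y, z} : Finset V) ∈ E)
    (hxy : f x < f y) (hyz : f y < f z) : f w < f y := by
  have green : φ y z = 2 := (h x y z hx hxy hyz).2.2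
  obtain ⟨hwy, hwz, -⟩ := ne_and_ne_and_ne_of_card_eq_three (hE _ hw)
  refine (lt_or_gt_of_ne (hf.ne hwy)).resolve_right fun hyw => ?_
  rcases lt_or_gt_of_ne (hf.ne hwz) with hwz | hzw
  · have : ({y, w, z} : Finset V) ∈ E := by rwa [insert_comm]
    have blue : φ y z = 1 := (h y w z this hyw hwz).2.1
    simp [green] at blue
  · have : ({y, z, w} : Finset V) ∈ E := by rwa [pair_comm, insert_comm]
    have red : φ y z = 0 := (h y z w this hyz hzw).1
    simp [green] at red

lemma lt_and_lt_of_lt_of_lt (h : IsRRSColoring E f φ) (hE : ∀ e ∈ E, #e = 3)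
    (hf : f.Injective) {x y z w : V} (hx : ({x, y, z} : Finset V) ∈ E)
    (hw : ({w, y, z} : Finset V) ∈ E) (hxy : f x < f y) (hxz : f x < f z) :
    f w < f y ∧ f w < f z := by
  rcases lt_or_gt_of_ne (hf.ne (ne_and_ne_and_ne_of_card_eq_three (hE _ hx)).2.2) with hyz | hzy
  · have hwy := h.lt_left_of_lt_left hE hf hx hw hxy hyz
    exact ⟨hwy, hwy.trans hyz⟩
  · rw [pair_comm] at hx hw
    have hwz := h.lt_left_of_lt_left hE hf hx hw hxz hzy
    exact ⟨hwz.trans hzy, hwz⟩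

end IsRRSColoring

lemma card_of_mem_C5edges : ∀ e ∈ C5edges, #e = 3 := by decide

lemma C5edges_mem_around (v : Fin 5) :
    ({v, v + 1, v + 2} : Finset (Fin 5)) ∈ C5edges ∧
      ({v + 3, v + 1, v + 2} : Finset (Fin 5)) ∈ C5edges ∧
      ({v, v + 3, v + 4} : Finset (Fin 5)) ∈ C5edges ∧
      ({v + 2, v + 3, v + 4} : Finset (Fin 5)) ∈ C5edges := by
  revert v; decide

/-- There is no vertex ordering (injective labeling `f`) and 3-coloring
(`0` = red, `1` = blue, `2` = green) of pairs such that every edge of the tight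
cycle `C_5`, listed with vertices increasing under `f`, has its smallest pair red,
its outer pair blue and its largest pair green: `C_5` does not satisfy the
Reiher–Rödl–Schacht zero-uniform-Turán-density condition. -/
theorem C5_no_RRS_coloring :
    ¬ ∃ (f : Fin 5 → Fin 5) (φ : Fin 5 → Fin 5 → Fin 3), Function.Injective f ∧
      ∀ a b c : Fin 5, ({a, b, c} : Finset (Fin 5)) ∈ C5edges →
        f a < f b → f b < f c → (φ a b = 0 ∧ φ a c = 1 ∧ φ b c = 2) := by
  rintro ⟨f, φ, hf, h⟩
  replace h : IsRRSColoring C5edges f φ := h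
  obtain ⟨v, hv⟩ := Finite.exists_min f
  have lt_of_ne {u : Fin 5} (hu : u ≠ v) : f v < f u := (hv u).lt_of_ne (hf.ne hu.symm)
  obtain ⟨e012, e312, e034, e234⟩ := C5edges_mem_around v
  have h32 : f (v + 3) < f (v + 2) :=
    (h.lt_and_lt_of_lt_of_lt card_of_mem_C5edges hf e012 e312
      (lt_of_ne (by simp)) (lt_of_ne (by simp))).2
  have h23 : f (v + 2) < f (v + 3) :=
    (h.lt_and_lt_of_lt_of_lt card_of_mem_C5edges hf e034 e234
      (lt_of_ne (by simp)) (lt_of_ne (by simp))).1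
  exact h32.asymm h23
end

section
/- Let f(w,x,y,z) = w·x·y^2 + w·(y+z)·x^2 + ((x+y+z)^2/2 − x^2/2 − y^2/2)·w^2 on the simplex R = {(w,x,y,z) : w,x,y,z ≥ 0, w+x+y+z = 1}. Then the maximum of f on R is 1/27, attained uniquely at (1/3, 1/3, 1/3, 0). -/
/-!
With `T = x + y + z = 1 - w` one has `f = w (y² (x - w/2) + x² (y + z) + w (T² - x²)/2)`, so shifting
mass from `z` to `y` changes `f` with the sign of `x - w/2`. If `x ≥ w/2`, shifting all of `z` raises
`f` by `w z (2y + z)(x - w/2)` to `w x (y + z)`, which is at most `1/27` by AM–GM, with equality only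
for `w = x = y + z = 1/3`, and then the gain vanishes only for `z = 0`. If `x < w/2`, dropping the
`y²` term and using `x² ≤ w x / 2` gives `f ≤ (9/16) (w T)² ≤ 9/256 < 1/27`.
-/

theorem one_div_27_sub_mul_mul {a b c : ℝ} (h : a + b + c = 1) :
    1 / 27 - a * b * c = (2 - 3 * (b + c)) ^ 2 * (1 + 3 * (b + c)) / 108 + a * (b - c) ^ 2 / 4 := by
  obtain rfl : a = 1 - b - c := by linarith
  ring

theorem mul_mul_le_one_div_27 {a b c : ℝ} (ha : 0 ≤ a) (hb : 0 ≤ b) (hc : 0 ≤ c)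
    (h : a + b + c = 1) : a * b * c ≤ 1 / 27 := by
  have := one_div_27_sub_mul_mul h
  have : 0 ≤ (2 - 3 * (b + c)) ^ 2 * (1 + 3 * (b + c)) := by positivity
  have : 0 ≤ a * (b - c) ^ 2 := by positivity
  linarith

theorem eq_one_div_three_of_mul_mul_eq {a b c : ℝ} (ha : 0 ≤ a) (hb : 0 ≤ b) (hc : 0 ≤ c)
    (h : a + b + c = 1) (heq : a * b * c = 1 / 27) : a = 1 / 3 ∧ b = 1 / 3 ∧ c = 1 / 3 := by
  have hid := one_div_27_sub_mul_mul h
  have h₁ : 0 ≤ (2 - 3 * (b + c)) ^ 2 * (1 + 3 * (b + c)) := by positivity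
  have h₂ : 0 ≤ a * (b - c) ^ 2 := by positivity
  have hbc : 2 - 3 * (b + c) = 0 := by
    have : (2 - 3 * (b + c)) ^ 2 * (1 + 3 * (b + c)) = 0 := by linarith
    simpa [(by positivity : (1 + 3 * (b + c)) ≠ 0)] using this
  have ha3 : a = 1 / 3 := by linarith
  have : b - c = 0 := by
    have : a * (b - c) ^ 2 = 0 := by linarith
    simpa [ha3] using this
  refine ⟨ha3, ?_, ?_⟩ <;> linarith

noncomputable def codegreeObjective (w x y z : ℝ) : ℝ :=
  w * x * y ^ 2 + w * (y + z) * x ^ 2 + ((x + y + z) ^ 2 / 2 - x ^ 2 / 2 - y ^ 2 / 2) * w ^ 2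

section
variable {w x y z : ℝ}

theorem codegreeObjective_eq_sub (hsum : w + x + y + z = 1) :
    codegreeObjective w x y z = w * x * (y + z) - w * z * (2 * y + z) * (x - w / 2) := by
  unfold codegreeObjective
  linear_combination w * x * (y + z) * hsum

theorem codegreeObjective_le_mul_mul (hsum : w + x + y + z = 1) (hw : 0 ≤ w) (hy : 0 ≤ y)
    (hz : 0 ≤ z) (hx : w / 2 ≤ x) : codegreeObjective w x y z ≤ w * x * (y + z) := by
  rw [codegreeObjective_eq_sub hsum, sub_le_self_iff]
  have : 0 ≤ x - w / 2 := by linarith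
  positivity

theorem eq_zero_of_codegreeObjective_eq_mul_mul (hsum : w + x + y + z = 1) (hw : 0 < w)
    (hy : 0 ≤ y) (hz : 0 ≤ z) (hx : w / 2 < x) (heq : codegreeObjective w x y z = w * x * (y + z)) :
    z = 0 := by
  rw [codegreeObjective_eq_sub hsum, sub_eq_self] at heq
  have hx' : x - w / 2 ≠ 0 := (sub_pos.2 hx).ne'
  simp only [mul_eq_zero, hw.ne', hx', false_or, or_false] at heq
  rcases heq with h | h
  · exact h
  · linarith

theorem codegreeObjective_eq_mul (w x y z : ℝ) : codegreeObjective w x y z =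
    w * (y ^ 2 * (x - w / 2) + x ^ 2 * (y + z) + w * ((x + y + z) ^ 2 - x ^ 2) / 2) := by
  unfold codegreeObjective
  ring

theorem codegreeObjective_le_of_le_half (hsum : w + x + y + z = 1) (hw : 0 ≤ w) (hx : 0 ≤ x)
    (hy : 0 ≤ y) (hz : 0 ≤ z) (hxw : x ≤ w / 2) : codegreeObjective w x y z ≤ 9 / 256 := by
  set T := x + y + z
  have hwT : w * T ≤ 1 / 4 := by nlinarith [sq_nonneg (w - T)]
  have hinner : y ^ 2 * (x - w / 2) + x ^ 2 * (y + z) + w * (T ^ 2 - x ^ 2) / 2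
      ≤ w * (9 * T ^ 2 / 8) / 2 := by
    have h₁ : y ^ 2 * (x - w / 2) ≤ 0 := mul_nonpos_of_nonneg_of_nonpos (sq_nonneg y) (by linarith)
    have h₂ : x ^ 2 * (y + z) ≤ w * x / 2 * (y + z) := by gcongr; nlinarith
    have h₃ : (y + z) * (T + 2 * x) ≤ 9 * T ^ 2 / 8 := by nlinarith [sq_nonneg (T - 4 * x)]
    nlinarith
  calc codegreeObjective w x y z
      = w * (y ^ 2 * (x - w / 2) + x ^ 2 * (y + z) + w * (T ^ 2 - x ^ 2) / 2) :=
        codegreeObjective_eq_mul w x y z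
    _ ≤ w * (w * (9 * T ^ 2 / 8) / 2) := by gcongr
    _ = 9 / 16 * (w * T) ^ 2 := by ring
    _ ≤ 9 / 16 * (1 / 4) ^ 2 := by gcongr
    _ = 9 / 256 := by norm_num

end

/-- On the simplex `{w,x,y,z ≥ 0, w+x+y+z = 1}` the polynomial
`f(w,x,y,z) = wxy² + w(y+z)x² + ((x+y+z)²/2 − x²/2 − y²/2)w²` has maximum `1/27`,
attained uniquely at `(1/3, 1/3, 1/3, 0)`. -/
theorem f_max_on_simplex (w x y z : ℝ)
    (hw : 0 ≤ w) (hx : 0 ≤ x) (hy : 0 ≤ y) (hz : 0 ≤ z) (hsum : w + x + y + z = 1) :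
    w * x * y ^ 2 + w * (y + z) * x ^ 2 +
        ((x + y + z) ^ 2 / 2 - x ^ 2 / 2 - y ^ 2 / 2) * w ^ 2 ≤ 1 / 27 ∧
    (w * x * y ^ 2 + w * (y + z) * x ^ 2 +
        ((x + y + z) ^ 2 / 2 - x ^ 2 / 2 - y ^ 2 / 2) * w ^ 2 = 1 / 27 ↔
      w = 1 / 3 ∧ x = 1 / 3 ∧ y = 1 / 3 ∧ z = 0) := by
  change codegreeObjective w x y z ≤ 1 / 27 ∧ (codegreeObjective w x y z = 1 / 27 ↔ _)
  have hyz : 0 ≤ y + z := by positivity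
  have hsum₃ : w + x + (y + z) = 1 := by linarith
  have hmax : codegreeObjective (1 / 3) (1 / 3) (1 / 3) 0 = 1 / 27 := by
    norm_num [codegreeObjective]
  rcases le_or_gt (w / 2) x with hxw | hxw
  · have hle := codegreeObjective_le_mul_mul hsum hw hy hz hxw
    have hprod := mul_mul_le_one_div_27 hw hx hyz hsum₃
    refine ⟨hle.trans hprod, fun heq => ?_, by rintro ⟨rfl, rfl, rfl, rfl⟩; exact hmax⟩
    obtain ⟨rfl, rfl, hyz₃⟩ :=
      eq_one_div_three_of_mul_mul_eq hw hx hyz hsum₃ (le_antisymm hprod (heq ▸ hle))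
    obtain rfl := eq_zero_of_codegreeObjective_eq_mul_mul hsum (by norm_num) hy hz (by norm_num)
      (le_antisymm hle (by linarith))
    exact ⟨rfl, rfl, by linarith, rfl⟩
  · have hlt : codegreeObjective w x y z < 1 / 27 :=
      (codegreeObjective_le_of_le_half hsum hw hx hy hz hxw.le).trans_lt (by norm_num)
    refine ⟨hlt.le, fun heq => absurd heq hlt.ne, ?_⟩
    rintro ⟨rfl, rfl, -, -⟩
    norm_num at hxw
end
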